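/- For all φ, ψ ∈ D and n ∈ ℕ, the annihilation-type relation ∇_ψ^P Q_n^{π_σ}(γ; φ^{⊗n}) = n (φ,ψ)_{L²(σ)} Q_{n-1}^{π_σ}(γ; φ^{⊗(n-1)}) and the creation-type relation ∇_ψ^{P*} Q_n^{π_σ}(γ; φ^{⊗n}) = Q_{n+1}^{π_σ}(γ; φ^{⊗n} ⊗̂ ψ) hold, where ⊗̂ denotes the symmetric tensor product. -/

import Mathlib

open MeasureTheory
open scoped ENNReal RealInnerProductSpace

noncomputable section
attribute [local instance] Classical.propDecidable

/-- We realize the (Riemannian) manifold `X` as the Euclidean space `ℝ^d`. -/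
abbrev EucSp (d : ℕ) := EuclideanSpace ℝ (Fin d)

/-- A configuration is locally finite: `|γ ∩ K| < ∞` for every compact `K`. -/
def LocallyFiniteConfig {d : ℕ} (γ : Set (EucSp d)) : Prop :=
  ∀ K : Set (EucSp d), IsCompact K → (γ ∩ K).Finite

/-- A smooth cylinder function `F ∈ FC_b^∞(D,Γ)`:
`F(γ) = g(⟨γ,φ_1⟩,…,⟨γ,φ_N⟩)` with `g ∈ C_b^∞(ℝ^N)` and `φ_i ∈ C_0^∞(X)`. -/
structure Cylinder (d N : ℕ) where
  g : (Fin N → ℝ) → ℝ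
  φ : Fin N → EucSp d → ℝ
  hg : ContDiff ℝ (⊤ : ℕ∞) g
  hgb : ∃ C, ∀ y, |g y| ≤ C
  hφ : ∀ i, ContDiff ℝ (⊤ : ℕ∞) (φ i)
  hφc : ∀ i, HasCompactSupport (φ i)

/-- Evaluation `F(γ) = g(⟨γ,φ_1⟩,…,⟨γ,φ_N⟩)`, `⟨γ,φ⟩ = ∑_{x∈γ} φ(x)`. -/
def Cylinder.eval {d N : ℕ} (F : Cylinder d N) (γ : Set (EucSp d)) : ℝ :=
  F.g fun i => ∑' x : γ, F.φ i x

/-- Partial derivative `∂_i g` at `y`. -/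
def pderiv' {N : ℕ} (g : (Fin N → ℝ) → ℝ) (i : Fin N) (y : Fin N → ℝ) : ℝ :=
  fderiv ℝ g y (Pi.single i 1)

/-- The intrinsic gradient `∇^Γ F(γ;x) = ∑_i ∂_i g(⟨γ,φ⟩) ∇^X φ_i(x)`. -/
def Cylinder.gradAt {d N : ℕ} (F : Cylinder d N) (γ : Set (EucSp d)) (x : EucSp d) :
    EucSp d :=
  ∑ i, pderiv' F.g i (fun j => ∑' y : γ, F.φ j y) • gradient (F.φ i) x

/-- The directional derivative
`∇^Γ_v F(γ) = ∑_i ∂_i g(⟨γ,φ⟩) ⟨γ, ∇^X_v φ_i⟩` with `∇^X_v φ(x) = ⟨∇^X φ(x), v(x)⟩`. -/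
def Cylinder.dirDeriv {d N : ℕ} (F : Cylinder d N) (v : EucSp d → EucSp d)
    (γ : Set (EucSp d)) : ℝ :=
  ∑ i, pderiv' F.g i (fun j => ∑' y : γ, F.φ j y) *
    ∑' x : γ, ⟪gradient (F.φ i) x, v x⟫

/-- `v ∈ V_0(X)`: smooth vector field with compact support. -/
def IsVectorField {d : ℕ} (v : EucSp d → EucSp d) : Prop :=
  ContDiff ℝ (⊤ : ℕ∞) v ∧ HasCompactSupport v

/-- The divergence `div^X v` with respect to the volume element. -/
def diverg {d : ℕ} (v : EucSp d → EucSp d) (x : EucSp d) : ℝ :=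
  ∑ i, ⟪fderiv ℝ v x (EuclideanSpace.single i 1), EuclideanSpace.single i 1⟫

/-- The Laplacian `Δ^X φ` on `X`. -/
def lapl {d : ℕ} (φ : EucSp d → ℝ) (x : EucSp d) : ℝ :=
  ∑ i, ⟪fderiv ℝ (fun y => gradient φ y) x (EuclideanSpace.single i 1),
        EuclideanSpace.single i 1⟫

/-- Pairing `⟨γ,φ⟩ = ∑_{x∈γ} φ(x)`. -/
def configPairing {X : Type*} (γ : Set X) (φ : X → ℝ) : ℝ := ∑' x : γ, φ x

/-- `π` is the Poisson measure with intensity `σ` (defined via its Laplace transform). -/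
def IsPoissonMeasure {X : Type*} [MeasurableSpace X] [TopologicalSpace X]
    (σ : Measure X) (π : Measure (Set X)) : Prop :=
  IsProbabilityMeasure π ∧
  ∀ φ : X → ℝ, Continuous φ → HasCompactSupport φ →
    ∫ γ : Set X, Real.exp (configPairing γ φ) ∂π =
      Real.exp (∫ x, (Real.exp (φ x) - 1) ∂σ)

/-- The logarithmic derivative of `π_σ` along `v`:
`B_v^{π_σ}(γ) = ∑_{x∈γ} (⟨β^σ(x),v(x)⟩ + div^X v(x))`, where `β^σ = ∇ρ/ρ`. -/
def logDerivPoisson {d : ℕ} (β : EucSp d → EucSp d) (v : EucSp d → EucSp d)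
    (γ : Set (EucSp d)) : ℝ :=
  ∑' x : γ, (⟪β x, v x⟫ + diverg v x)

/-- The data of an intensity measure `σ = ρ·m` on `X = ℝ^d` with `ρ > 0` `m`-a.e.,
`ρ^{1/2} ∈ H^{1,2}_loc` (modelled by differentiability of `ρ`), together with its
logarithmic derivative `β^σ = ∇^X ρ / ρ`. -/
structure IntensityData (d : ℕ) where
  ρ : EucSp d → ℝ
  β : EucSp d → EucSp d
  hρm : Measurable ρ
  hρpos : ∀ᵐ x ∂(volume : Measure (EucSp d)), 0 < ρ x
  hρd : Differentiable ℝ ρ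
  hβ : ∀ x, gradient ρ x = ρ x • β x

/-- The measure `σ = ρ·m`. -/
def IntensityData.σ {d : ℕ} (D : IntensityData d) : Measure (EucSp d) :=
  (volume : Measure (EucSp d)).withDensity fun x => ENNReal.ofReal (D.ρ x)

/-- A test function `φ ∈ D = C_0^∞(X)`. -/
def IsTestFn {d : ℕ} (φ : EucSp d → ℝ) : Prop :=
  ContDiff ℝ (⊤ : ℕ∞) φ ∧ HasCompactSupport φ

/-- The directional Poissonian gradient (annihilation operator)
`∇_ψ^P F(γ) = ∫_X (F(γ+ε_x) − F(γ)) ψ(x) dσ(x)`. -/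
def anniOp {d : ℕ} (σ : Measure (EucSp d)) (ψ : EucSp d → ℝ)
    (F : Set (EucSp d) → ℝ) (γ : Set (EucSp d)) : ℝ :=
  ∫ x, (F (insert x γ) - F γ) * ψ x ∂σ

/-- The adjoint (creation operator) `∇_φ^{P*}` of the directional Poissonian gradient,
given explicitly by `(∇_φ^{P*}F)(γ) = ∫_X F(γ−ε_x)φ(x) dγ(x) − (∫_X φ dσ) F(γ)`. -/
def creOp {d : ℕ} (σ : Measure (EucSp d)) (φ : EucSp d → ℝ)
    (F : Set (EucSp d) → ℝ) (γ : Set (EucSp d)) : ℝ :=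
  (∑' x : γ, F (γ \ {(x : EucSp d)}) * φ x) - (∫ x, φ x ∂σ) * F γ

/-- The Charlier polynomials `Q_n^{π_σ}(γ; φ^{⊗n}) := ((∇_φ^{P*})^n 1)(γ)`. -/
def charlier {d : ℕ} (σ : Measure (EucSp d)) (φ : EucSp d → ℝ) :
    ℕ → Set (EucSp d) → ℝ
  | 0 => fun _ => 1
  | n + 1 => creOp σ φ (charlier σ φ n)

/-- Charlier polynomials with (product-type) kernels `φ_1 ⊗̂ … ⊗̂ φ_n`:
`Q(γ; φ_1 ⊗̂ ⋯ ⊗̂ φ_n) = (∇_{φ_1}^{P*} ⋯ ∇_{φ_n}^{P*} 1)(γ)`. -/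
def charlierList {d : ℕ} (σ : Measure (EucSp d)) :
    List (EucSp d → ℝ) → Set (EucSp d) → ℝ
  | [] => fun _ => 1
  | φ :: l => creOp σ φ (charlierList σ l)

section Aux
variable {d : ℕ}

lemma lfc_mono {γ γ' : Set (EucSp d)} (h : γ' ⊆ γ) (hγ : LocallyFiniteConfig γ) :
    LocallyFiniteConfig γ' := fun K hK =>
  (hγ K hK).subset (Set.inter_subset_inter_left K h)

lemma lfc_insert {γ : Set (EucSp d)} (hγ : LocallyFiniteConfig γ) (x : EucSp d) :
    LocallyFiniteConfig (insert x γ) := fun K hK =>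
  ((hγ K hK).insert x).subset (by
    rintro y ⟨hy | hy, hyK⟩
    · exact Or.inl hy
    · exact Or.inr ⟨hy, hyK⟩)

lemma lfc_countable {γ : Set (EucSp d)} (hγ : LocallyFiniteConfig γ) : γ.Countable := by
  have h : γ = ⋃ n : ℕ, γ ∩ Metric.closedBall 0 n := by
    ext x
    simp only [Set.mem_iUnion, Set.mem_inter_iff, Metric.mem_closedBall]
    exact ⟨fun hx => (exists_nat_ge (dist x 0)).imp fun n hn => ⟨hx, hn⟩,
      fun ⟨n, hn, _⟩ => hn⟩
  rw [h]
  exact Set.countable_iUnion fun n => (hγ _ (isCompact_closedBall 0 n)).countable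

lemma tsum_conf {E : Type*} {γ : Set E} (g : E → ℝ) (S : Finset E)
    (hmem : ∀ x ∈ γ, g x ≠ 0 → x ∈ S) (hsub : ∀ x ∈ S, x ∈ γ) :
    ∑' x : γ, g (x : E) = ∑ x ∈ S, g x := by
  rw [tsum_subtype]
  rw [tsum_eq_sum (s := S) ?_]
  · exact Finset.sum_congr rfl fun x hx => Set.indicator_of_mem (hsub x hx) g
  · intro b hb
    by_cases hbγ : b ∈ γ
    · have hg : g b = 0 := by
        by_contra h
        exact hb (hmem b hbγ h)
      simpa [Set.indicator_of_mem hbγ] using hg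
    · exact Set.indicator_of_notMem hbγ g

lemma creOp_eq' (σ : Measure (EucSp d)) (φ : EucSp d → ℝ) (F : Set (EucSp d) → ℝ)
    (γ : Set (EucSp d)) (S : Finset (EucSp d))
    (hmem : ∀ x ∈ γ, φ x ≠ 0 → x ∈ S) (hsub : ∀ x ∈ S, x ∈ γ) :
    creOp σ φ F γ = (∑ x ∈ S, F (γ \ {x}) * φ x) - (∫ x, φ x ∂σ) * F γ := by
  unfold creOp
  congr 1
  exact tsum_conf (fun x => F (γ \ {x}) * φ x) S
    (fun x hx hne => hmem x hx (fun h0 => hne (by simp [h0]))) hsub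

lemma mem_suppFinset {γ : Set (EucSp d)} {φ : EucSp d → ℝ} (hγ : LocallyFiniteConfig γ)
    (hφ : HasCompactSupport φ) {x : EucSp d} :
    x ∈ (hγ (tsupport φ) hφ).toFinset ↔ x ∈ γ ∧ x ∈ tsupport φ := by
  simp [Set.Finite.mem_toFinset]

lemma charlier_succ (σ : Measure (EucSp d)) (φ : EucSp d → ℝ) (n : ℕ)
    (γ : Set (EucSp d)) :
    charlier σ φ (n + 1) γ = creOp σ φ (charlier σ φ n) γ := rfl

lemma charlier_sum (σ : Measure (EucSp d)) {γ : Set (EucSp d)} {φ : EucSp d → ℝ}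
    (S : Finset (EucSp d)) (hmem : ∀ x ∈ γ, φ x ≠ 0 → x ∈ S) (hsub : ∀ x ∈ S, x ∈ γ)
    (m : ℕ) :
    ∑ x ∈ S, charlier σ φ m (γ \ {x}) * φ x =
      charlier σ φ (m + 1) γ + (∫ x, φ x ∂σ) * charlier σ φ m γ := by
  have h := creOp_eq' σ φ (charlier σ φ m) γ S hmem hsub
  rw [charlier_succ, h]
  ring

lemma sum_erase_ite {α : Type*} [DecidableEq α] (S : Finset α) (y : α) (f : α → ℝ) :
    ∑ x ∈ S.erase y, f x = ∑ x ∈ S, if x = y then 0 else f x := by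
  rw [← Finset.filter_ne' S y, Finset.sum_filter]
  apply Finset.sum_congr rfl
  intro x _
  by_cases h : x = y <;> simp [h]

end Aux
section Aux2
variable {d : ℕ}

lemma charlier_insert (σ : Measure (EucSp d)) {φ : EucSp d → ℝ}
    (hφc : HasCompactSupport φ) :
    ∀ (n : ℕ) (γ : Set (EucSp d)), LocallyFiniteConfig γ → ∀ x ∉ γ,
      charlier σ φ n (insert x γ) =
        charlier σ φ n γ + (n : ℝ) * φ x * charlier σ φ (n - 1) γ := by
  intro n
  induction n with
  | zero => intro γ hγ x hx; simp [charlier]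
  | succ n ih =>
    intro γ hγ x hx
    set a := ∫ y, φ y ∂σ with ha
    set S : Finset (EucSp d) := (hγ (tsupport φ) hφc).toFinset with hSdef
    have hmemS : ∀ z ∈ γ, φ z ≠ 0 → z ∈ S := fun z hz hφz =>
      (mem_suppFinset hγ hφc).mpr ⟨hz, subset_tsupport φ hφz⟩
    have hsubS : ∀ z ∈ S, z ∈ γ := fun z hz => ((mem_suppFinset hγ hφc).mp hz).1
    have hxS : x ∉ S := fun h => hx (hsubS x h)
    have hL : charlier σ φ (n + 1) (insert x γ) =
        (∑ y ∈ insert x S, charlier σ φ n (insert x γ \ {y}) * φ y)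
          - a * charlier σ φ n (insert x γ) := by
      rw [charlier_succ, creOp_eq' σ φ _ _ (insert x S) ?_ ?_]
      · intro y hy hfy
        rcases hy with rfl | hyγ
        · exact Finset.mem_insert_self _ _
        · exact Finset.mem_insert_of_mem (hmemS y hyγ hfy)
      · intro y hy
        rcases Finset.mem_insert.mp hy with rfl | hyS
        · exact Set.mem_insert _ _
        · exact Set.mem_insert_of_mem _ (hsubS y hyS)
    rw [hL, Finset.sum_insert hxS, Set.insert_sdiff_self_of_notMem hx]
    have hterm : ∀ y ∈ S, charlier σ φ n (insert x γ \ {y}) * φ y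
        = charlier σ φ n (γ \ {y}) * φ y
          + (n : ℝ) * φ x * (charlier σ φ (n - 1) (γ \ {y}) * φ y) := by
      intro y hyS
      have hyγ : y ∈ γ := hsubS y hyS
      have hxy : x ∉ ({y} : Set (EucSp d)) := by
        simp only [Set.mem_singleton_iff]
        rintro rfl
        exact hx hyγ
      rw [Set.insert_sdiff_of_notMem _ hxy,
        ih (γ \ {y}) (lfc_mono Set.diff_subset hγ) x (fun h => hx h.1)]
      ring
    rw [Finset.sum_congr rfl hterm, Finset.sum_add_distrib, ← Finset.mul_sum]
    have h1 : ∑ y ∈ S, charlier σ φ n (γ \ {y}) * φ y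
        = charlier σ φ (n + 1) γ + a * charlier σ φ n γ :=
      charlier_sum σ S hmemS hsubS n
    have h2 : (n : ℝ) * φ x * (∑ y ∈ S, charlier σ φ (n - 1) (γ \ {y}) * φ y)
        = (n : ℝ) * φ x * (charlier σ φ n γ + a * charlier σ φ (n - 1) γ) := by
      cases n with
      | zero => simp
      | succ m =>
        congr 1
        simpa using charlier_sum σ S hmemS hsubS m
    have h3 : charlier σ φ n (insert x γ) =
        charlier σ φ n γ + (n : ℝ) * φ x * charlier σ φ (n - 1) γ := ih γ hγ x hx
    rw [h1, h2, h3]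
    simp only [Nat.add_sub_cancel]
    push_cast
    ring

end Aux2
section Aux3
variable {d : ℕ}

lemma creOp_expand (σ : Measure (EucSp d)) {γ : Set (EucSp d)}
    (hγ : LocallyFiniteConfig γ) (F : Set (EucSp d) → ℝ)
    (φ ψ : EucSp d → ℝ) (hφc : HasCompactSupport φ) (hψc : HasCompactSupport ψ) :
    creOp σ ψ (creOp σ φ F) γ =
      (∑ y ∈ (hγ (tsupport ψ) hψc).toFinset, ∑ x ∈ (hγ (tsupport φ) hφc).toFinset,
        if x = y then 0 else F ((γ \ {y}) \ {x}) * φ x * ψ y)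
      - (∫ z, φ z ∂σ) * ∑ y ∈ (hγ (tsupport ψ) hψc).toFinset, F (γ \ {y}) * ψ y
      - (∫ z, ψ z ∂σ) * ∑ x ∈ (hγ (tsupport φ) hφc).toFinset, F (γ \ {x}) * φ x
      + (∫ z, ψ z ∂σ) * (∫ z, φ z ∂σ) * F γ := by
  set Sφ := (hγ (tsupport φ) hφc).toFinset with hSφ
  set Sψ := (hγ (tsupport ψ) hψc).toFinset with hSψ
  have hmφ : ∀ x ∈ γ, φ x ≠ 0 → x ∈ Sφ := fun z hz hφz =>
    (mem_suppFinset hγ hφc).mpr ⟨hz, subset_tsupport φ hφz⟩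
  have hsφ : ∀ x ∈ Sφ, x ∈ γ := fun z hz => ((mem_suppFinset hγ hφc).mp hz).1
  have hmψ : ∀ x ∈ γ, ψ x ≠ 0 → x ∈ Sψ := fun z hz hψz =>
    (mem_suppFinset hγ hψc).mpr ⟨hz, subset_tsupport ψ hψz⟩
  have hsψ : ∀ x ∈ Sψ, x ∈ γ := fun z hz => ((mem_suppFinset hγ hψc).mp hz).1
  rw [creOp_eq' σ ψ _ γ Sψ hmψ hsψ, creOp_eq' σ φ F γ Sφ hmφ hsφ]
  have hin : ∀ y ∈ Sψ, creOp σ φ F (γ \ {y}) * ψ y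
      = (∑ x ∈ Sφ, if x = y then 0 else F ((γ \ {y}) \ {x}) * φ x * ψ y)
        - (∫ z, φ z ∂σ) * (F (γ \ {y}) * ψ y) := by
    intro y hy
    rw [creOp_eq' σ φ F (γ \ {y}) (Sφ.erase y) ?_ ?_]
    · rw [sub_mul, Finset.sum_mul, sum_erase_ite]
      ring
    · rintro x ⟨hxγ, hxy⟩ hφx
      refine Finset.mem_erase.mpr ⟨?_, hmφ x hxγ hφx⟩
      simpa using hxy
    · intro x hx
      rcases Finset.mem_erase.mp hx with ⟨hne, hxS⟩
      exact ⟨hsφ x hxS, by simp [hne]⟩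
  rw [Finset.sum_congr rfl hin, Finset.sum_sub_distrib, ← Finset.mul_sum]
  ring

lemma creOp_comm (σ : Measure (EucSp d)) {γ : Set (EucSp d)}
    (hγ : LocallyFiniteConfig γ) {φ ψ : EucSp d → ℝ}
    (hφc : HasCompactSupport φ) (hψc : HasCompactSupport ψ) (F : Set (EucSp d) → ℝ) :
    creOp σ ψ (creOp σ φ F) γ = creOp σ φ (creOp σ ψ F) γ := by
  rw [creOp_expand σ hγ F φ ψ hφc hψc, creOp_expand σ hγ F ψ φ hψc hφc]
  have hD : (∑ y ∈ (hγ (tsupport ψ) hψc).toFinset, ∑ x ∈ (hγ (tsupport φ) hφc).toFinset,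
        if x = y then 0 else F ((γ \ {y}) \ {x}) * φ x * ψ y)
      = ∑ y ∈ (hγ (tsupport φ) hφc).toFinset, ∑ x ∈ (hγ (tsupport ψ) hψc).toFinset,
        if x = y then 0 else F ((γ \ {y}) \ {x}) * ψ x * φ y := by
    rw [Finset.sum_comm]
    apply Finset.sum_congr rfl
    intro x _
    apply Finset.sum_congr rfl
    intro y _
    by_cases h : x = y
    · simp [h, eq_comm]
    · have h' : ¬ y = x := fun hh => h hh.symm
      rw [if_neg h, if_neg h', Set.diff_diff_comm]
      ring
  rw [hD]
  ring

lemma creOp_congr (σ : Measure (EucSp d)) (φ : EucSp d → ℝ) {γ : Set (EucSp d)}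
    (hγ : LocallyFiniteConfig γ) {F G : Set (EucSp d) → ℝ}
    (h : ∀ γ', LocallyFiniteConfig γ' → F γ' = G γ') :
    creOp σ φ F γ = creOp σ φ G γ := by
  unfold creOp
  rw [h γ hγ]
  congr 1
  apply tsum_congr
  intro x
  rw [h _ (lfc_mono Set.diff_subset hγ)]

lemma cre_main (σ : Measure (EucSp d)) {φ ψ : EucSp d → ℝ}
    (hφc : HasCompactSupport φ) (hψc : HasCompactSupport ψ) :
    ∀ (n : ℕ) {γ : Set (EucSp d)}, LocallyFiniteConfig γ →
      creOp σ ψ (charlier σ φ n) γ = charlierList σ (List.replicate n φ ++ [ψ]) γ := by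
  intro n
  induction n with
  | zero => intro γ hγ; rfl
  | succ n ih =>
    intro γ hγ
    have h1 : charlierList σ (List.replicate (n + 1) φ ++ [ψ]) γ
        = creOp σ φ (charlierList σ (List.replicate n φ ++ [ψ])) γ := rfl
    rw [h1, ← creOp_congr σ φ hγ (fun γ' hγ' => ih hγ')]
    exact creOp_comm σ hγ hφc hψc (charlier σ φ n)

end Aux3
section Aux4
variable {d : ℕ}

lemma sigma_null (D : IntensityData d) (hd : 0 < d) {γ : Set (EucSp d)}
    (hγc : γ.Countable) : D.σ γ = 0 := by
  haveI : Nonempty (Fin d) := ⟨⟨0, hd⟩⟩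
  haveI : Nontrivial (EucSp d) := by
    refine ⟨EuclideanSpace.single ⟨0, hd⟩ 1, 0, fun h => ?_⟩
    have h2 : (EuclideanSpace.single ⟨0, hd⟩ (1:ℝ) : EucSp d) ⟨0, hd⟩ = (0 : EucSp d) ⟨0, hd⟩ := by rw [h]
    rw [EuclideanSpace.single_apply] at h2
    simp at h2
  haveI : NullSingletonClass (volume : Measure (EucSp d)) := by infer_instance
  have hv : (volume : Measure (EucSp d)) γ = 0 := hγc.measure_zero _
  show (volume : Measure (EucSp d)).withDensity _ γ = 0
  rw [withDensity_apply _ hγc.measurableSet]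
  exact setLIntegral_measure_zero _ _ hv

lemma anni_main (σ : Measure (EucSp d)) {φ : EucSp d → ℝ} (ψ : EucSp d → ℝ)
    (hφc : HasCompactSupport φ) (n : ℕ) {γ : Set (EucSp d)}
    (hγ : LocallyFiniteConfig γ) (hae : ∀ᵐ x ∂σ, x ∉ γ) :
    anniOp σ ψ (charlier σ φ n) γ =
      (n : ℝ) * (∫ x, φ x * ψ x ∂σ) * charlier σ φ (n - 1) γ := by
  unfold anniOp
  have h : ∀ᵐ x ∂σ, (charlier σ φ n (insert x γ) - charlier σ φ n γ) * ψ x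
      = ((n : ℝ) * charlier σ φ (n - 1) γ) * (φ x * ψ x) := by
    filter_upwards [hae] with x hx
    rw [charlier_insert σ hφc n γ hγ x hx]
    ring
  rw [integral_congr_ae h, integral_const_mul]
  ring

lemma d0_no_poisson (D : IntensityData 0) (π : Measure (Set (EucSp 0)))
    (hπ : IsPoissonMeasure D.σ π) : False := by
  haveI hsub : Subsingleton (EucSp 0) := inferInstance
  haveI := hπ.1
  -- the total mass of σ
  have hvol0 : (volume : Measure (EucSp 0)) ≠ 0 := by
    intro h
    exact (isOpen_univ.measure_pos (volume : Measure (EucSp 0)) Set.univ_nonempty).ne'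
      (by rw [h]; rfl)
  have hρ0 : 0 < D.ρ 0 := by
    haveI : (ae (volume : Measure (EucSp 0))).NeBot := ae_neBot.mpr hvol0
    obtain ⟨x, hx⟩ := D.hρpos.exists
    rwa [Subsingleton.elim (0 : EucSp 0) x]
  have hσuniv : D.σ Set.univ = ENNReal.ofReal (D.ρ 0) * (volume : Measure (EucSp 0)) Set.univ := by
    show (volume : Measure (EucSp 0)).withDensity _ Set.univ = _
    rw [withDensity_apply _ MeasurableSet.univ, Measure.restrict_univ]
    have : (fun x : EucSp 0 => ENNReal.ofReal (D.ρ x)) = fun _ => ENNReal.ofReal (D.ρ 0) :=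
      funext fun x => by rw [Subsingleton.elim x (0 : EucSp 0)]
    rw [this, lintegral_const]
  have hfin : D.σ Set.univ ≠ ⊤ := by
    rw [hσuniv]
    exact ENNReal.mul_ne_top ENNReal.ofReal_ne_top (measure_ne_top _ _)
  have hpos : 0 < D.σ Set.univ := by
    rw [hσuniv]
    exact ENNReal.mul_pos (by simp [hρ0]) (by
      simpa [pos_iff_ne_zero] using (isOpen_univ.measure_pos (volume : Measure (EucSp 0)) Set.univ_nonempty).ne')
  set s : ℝ := (D.σ Set.univ).toReal with hs
  have hspos : 0 < s := ENNReal.toReal_pos hpos.ne' hfin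
  -- the set of configurations containing the point
  set A : Set (Set (EucSp 0)) := {γ : Set (EucSp 0) | (0 : EucSp 0) ∈ γ} with hA
  have hAm : MeasurableSet A := measurableSet_mem 0
  set u : Set (EucSp 0) → ℝ := A.indicator (fun _ => (1 : ℝ)) with hu
  have hu_int : Integrable u π := (integrable_const (1 : ℝ)).indicator hAm
  set q : ℝ := ∫ γ, u γ ∂π with hq
  -- the key pointwise identity
  have key : ∀ (c : ℝ) (γ : Set (EucSp 0)),
      Real.exp (configPairing γ (fun _ => c)) = 1 + (Real.exp c - 1) * u γ := by
    intro c γ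
    by_cases h : (0 : EucSp 0) ∈ γ
    · have hγu : γ = Set.univ := Set.eq_univ_of_forall fun x => by
        rwa [Subsingleton.elim x (0 : EucSp 0)]
      have hpair : configPairing γ (fun _ => c) = c := by
        rw [hγu]
        unfold configPairing
        exact tsum_eq_single (⟨0, trivial⟩ : (Set.univ : Set (EucSp 0)))
          (fun b hb => absurd (Subsingleton.elim b _) hb)
      rw [hpair, hu, Set.indicator_of_mem (by exact h) _]
      ring
    · have hγe : γ = ∅ := Set.eq_empty_iff_forall_notMem.mpr fun x hx =>
        h (by rwa [Subsingleton.elim (0 : EucSp 0) x])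
      have hpair : configPairing γ (fun _ => c) = 0 := by
        rw [hγe]
        unfold configPairing
        exact tsum_empty
      rw [hpair, hu, Set.indicator_of_notMem (by exact h) _]
      simp [Real.exp_zero]
  -- the Laplace transform identity
  have lap : ∀ c : ℝ, 1 + (Real.exp c - 1) * q = Real.exp ((Real.exp c - 1) * s) := by
    intro c
    have h1 := hπ.2 (fun _ => c) continuous_const ((isClosed_tsupport _).isCompact)
    have h2 : ∫ γ, Real.exp (configPairing γ (fun _ => c)) ∂π
        = 1 + (Real.exp c - 1) * q := by
      have : (fun γ => Real.exp (configPairing γ (fun _ => c)))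
          = fun γ => 1 + (Real.exp c - 1) * u γ := funext fun γ => key c γ
      rw [this, integral_add (integrable_const 1) (hu_int.const_mul _),
        integral_const, integral_const_mul]
      simp [hq]
    have h3 : ∫ x : EucSp 0, (Real.exp ((fun _ => c) x) - 1) ∂D.σ = (Real.exp c - 1) * s := by
      rw [integral_const]
      simp [hs, mul_comm, measureReal_def]
    rw [h2, h3] at h1
    exact h1
  -- derive the contradiction
  have e1 := lap (Real.log 2)
  have e2 := lap (Real.log 3)
  rw [Real.exp_log two_pos] at e1
  rw [Real.exp_log three_pos] at e2
  norm_num at e1 e2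
  -- e1 : 1 + q = Real.exp s, e2 : 1 + 2 * q = Real.exp (2 * s)
  have h2s : Real.exp (2 * s) = Real.exp s * Real.exp s := by
    rw [two_mul, Real.exp_add]
  rw [h2s, ← e1] at e2
  have hq0 : q = 0 := by nlinarith
  rw [hq0] at e1
  have : s = 0 := by
    have := e1.symm
    rwa [add_zero, Real.exp_eq_one_iff] at this
  linarith

end Aux4
/-- annihilation and creation relations for Charlier polynomials:
for all test functions `φ, ψ ∈ D`, all `n ∈ ℕ` and every (locally finite)
configuration `γ`:
`∇_ψ^P Q_n^{π_σ}(γ;φ^{⊗n}) = n (φ,ψ)_{L²(σ)} Q_{n−1}^{π_σ}(γ;φ^{⊗(n−1)})` and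
`∇_ψ^{P*} Q_n^{π_σ}(γ;φ^{⊗n}) = Q_{n+1}^{π_σ}(γ; φ^{⊗n} ⊗̂ ψ)`,
the symmetric tensor `φ^{⊗n} ⊗̂ ψ` being realized by the kernel list
`[φ,…,φ,ψ]` (creation operators commute, so the order is immaterial). -/
theorem charlier_annihilation_creation {d : ℕ} (D : IntensityData d)
    (π : Measure (Set (EucSp d))) (hπ : IsPoissonMeasure D.σ π)
    (φ ψ : EucSp d → ℝ) (hφ : IsTestFn φ) (hψ : IsTestFn ψ) (n : ℕ)
    (γ : Set (EucSp d)) (hγ : LocallyFiniteConfig γ) :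
    anniOp D.σ ψ (charlier D.σ φ n) γ =
      (n : ℝ) * (∫ x, φ x * ψ x ∂D.σ) * charlier D.σ φ (n - 1) γ ∧
    creOp D.σ ψ (charlier D.σ φ n) γ =
      charlierList D.σ (List.replicate n φ ++ [ψ]) γ := by
  constructor
  · have hae : ∀ᵐ x ∂D.σ, x ∉ γ := by
      rcases Nat.eq_zero_or_pos d with hd | hd
      · subst hd
        exact (d0_no_poisson D π hπ).elim
      · exact measure_eq_zero_iff_ae_notMem.mp (sigma_null D hd (lfc_countable hγ))
    exact anni_main D.σ ψ hφ.2 n hγ hae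
  · exact cre_main D.σ hφ.2 hψ.2 n hγ
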